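/- arXiv:1001.1374 — 2 statements merged into one kernel-verified Lean document; each statement's English description precedes it below -/
import Mathlib

section
/- (Lundell–McCullough floor bound) Let G = K + C = A + B + Z with Z >= 0, L(A+Z) = L(A), and L(B+Z) = L(B). Then for D disjoint from Z, the minimum distance of C_Ω(D,G) is at least deg C + deg Z. -/
/-!
A nonzero codeword yields effective `D'`, supported in `D`, and `E` with `K ∼ G - D' + E`, so
`deg D' = deg C + deg E` and it suffices to show `deg Z ≤ deg E`. Subtracting `B`, resp. `B + Z`,
gives `K - B ∼ A + Z + E - D'` and `K - B - Z ∼ A + E - D'`. Since `L(B + Z) = L(B)`,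
Riemann–Roch makes `l` jump by the full `deg Z` from `K - B - Z` to `K - B`. On the other side,
`L(A + Z) = L(A)` survives the removal of the points of `D'`, which avoid `Z`, by the semigroup
property of `Γ_P`; so `l(A + Z + E - D') ≤ l(A - D') + deg E ≤ l(A + E - D') + deg E`.
-/

noncomputable section

/-- Degree of a divisor, where divisors on the curve are modeled as finitely
supported integer valued functions on the set of rational points. -/
def degr {Point : Type*} (D : Point →₀ ℤ) : ℤ := D.sum fun _ n => n

/-- An abstract model of a smooth projective absolutely irreducible curve over a field,
recording the data used in the paper: the dimension `l D` of the Riemann-Roch space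
`L(D)`, the genus `g`, a canonical divisor `K`, and linear equivalence `lin`,
together with their basic properties (Riemann-Roch, monotonicity, semigroup
properties of nongaps, etc.). -/
structure Curve (Point : Type*) where
  /-- `l D = dim L(D)` -/
  l : (Point →₀ ℤ) → ℕ
  /-- the genus -/
  g : ℕ
  /-- a canonical divisor -/
  K : Point →₀ ℤ
  /-- linear equivalence of divisors -/
  lin : (Point →₀ ℤ) → (Point →₀ ℤ) → Prop
  lin_refl : ∀ A, lin A A
  lin_symm : ∀ {A B}, lin A B → lin B A
  lin_trans : ∀ {A B C}, lin A B → lin B C → lin A C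
  lin_add : ∀ {A B} (E : Point →₀ ℤ), lin A B → lin (A + E) (B + E)
  deg_lin : ∀ {A B}, lin A B → degr A = degr B
  l_lin : ∀ {A B}, lin A B → l A = l B
  l_zero : l 0 = 1
  l_neg : ∀ {D}, degr D < 0 → l D = 0
  l_mono : ∀ (D : Point →₀ ℤ) (P : Point), l D ≤ l (D + Finsupp.single P 1)
  l_step : ∀ (D : Point →₀ ℤ) (P : Point), l (D + Finsupp.single P 1) ≤ l D + 1
  /-- Riemann-Roch -/
  rr : ∀ D : Point →₀ ℤ, (l D : ℤ) - l (K - D) = degr D + 1 - g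
  lin_of_deg_zero : ∀ {D}, l D ≠ 0 → degr D = 0 → lin D 0
  /-- the semigroup property of `Γ_P` -/
  gamma_add : ∀ (P : Point) {A B}, l A ≠ l (A - Finsupp.single P 1) →
      l B ≠ l (B - Finsupp.single P 1) → l (A + B) ≠ l (A + B - Finsupp.single P 1)
  eff_add : ∀ {A B}, l A ≠ 0 → l B ≠ 0 → l (A + B) ≠ 0
  point_nongap : ∀ {P Q : Point}, P ≠ Q →
      l (Finsupp.single P 1) ≠ l (Finsupp.single P 1 - Finsupp.single Q 1)

variable {Point : Type*}

/-- `Γ_P` : divisor (classes) with no base point at `P`, i.e. `L(A) ≠ L(A-P)`. -/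
def GammaP (X : Curve Point) (P : Point) : Set (Point →₀ ℤ) :=
  {A | X.l A ≠ X.l (A - Finsupp.single P 1)}

/-- `Γ_S = ∩_{P ∈ S} Γ_P`, with the convention `Γ_∅ = Γ = {A : L(A) ≠ 0}`. -/
def GammaS (X : Curve Point) (S : Finset Point) : Set (Point →₀ ℤ) :=
  {A | (S = ∅ → X.l A ≠ 0) ∧ ∀ P ∈ S, A ∈ GammaP X P}

/-- `Γ(C; S, S') = {A : A ∈ Γ_S and A - C ∈ Γ_{S'}}`. -/
def GammaSet (X : Curve Point) (C : Point →₀ ℤ) (S S' : Finset Point) :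
    Set (Point →₀ ℤ) :=
  {A | A ∈ GammaS X S ∧ A - C ∈ GammaS X S'}

/-- `γ(C; S, S') = min {deg A : A ∈ Γ(C; S, S')}`. -/
def gammaMin (X : Curve Point) (C : Point →₀ ℤ) (S S' : Finset Point) : ℤ :=
  sInf (degr '' GammaSet X C S S')

/-- `Δ = {i : A_i ∈ Γ_{P_i} and A_i - C ∉ Γ_{P_i}}` for indices `1 ≤ i ≤ n`. -/
def Delta (X : Curve Point) (C : Point →₀ ℤ) (n : ℕ) (A : ℕ → Point →₀ ℤ)
    (P : ℕ → Point) : Set ℕ :=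
  {i | 1 ≤ i ∧ i ≤ n ∧ A i ∈ GammaP X (P i) ∧ A i - C ∉ GammaP X (P i)}

/-- `Δ' = {i : A_i ∉ Γ_{P_i} and A_i - C ∈ Γ_{P_i}}` for indices `1 ≤ i ≤ n`. -/
def Delta' (X : Curve Point) (C : Point →₀ ℤ) (n : ℕ) (A : ℕ → Point →₀ ℤ)
    (P : ℕ → Point) : Set ℕ :=
  {i | 1 ≤ i ∧ i ≤ n ∧ A i ∉ GammaP X (P i) ∧ A i - C ∈ GammaP X (P i)}

theorem degr_eq_degree (D : Point →₀ ℤ) : degr D = D.degree := rfl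

theorem degr_nonneg {Z : Point →₀ ℤ} (hZ : 0 ≤ Z) : 0 ≤ degr Z :=
  Finset.sum_nonneg fun P _ => hZ P

theorem eq_zero_of_nonneg_of_degr_eq_zero {Z : Point →₀ ℤ} (hZ : 0 ≤ Z) (h : degr Z = 0) :
    Z = 0 := by
  ext P
  by_contra hP
  have hsum := (Finset.sum_eq_zero_iff_of_nonneg fun Q _ => hZ Q).mp h
  exact hP (hsum P (Finsupp.mem_support_iff.mpr hP))

@[elab_as_elim]
theorem effective_induction {M : (Z : Point →₀ ℤ) → 0 ≤ Z → Prop} (zero : M 0 le_rfl)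
    (add_single : ∀ Z P (hZ : 0 ≤ Z), M Z hZ →
      M (Z + Finsupp.single P 1) (add_nonneg hZ (Finsupp.single_nonneg.mpr zero_le_one)))
    {Z : Point →₀ ℤ} (hZ : 0 ≤ Z) : M Z hZ := by
  obtain ⟨n, hn⟩ : ∃ n : ℕ, degr Z = n := ⟨(degr Z).toNat, by simp [degr_nonneg hZ]⟩
  induction n generalizing Z with
  | zero =>
    obtain rfl := eq_zero_of_nonneg_of_degr_eq_zero hZ (by exact_mod_cast hn)
    exact zero
  | succ n ih =>
    obtain ⟨P, hP⟩ : ∃ P, Z P ≠ 0 := by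
      by_contra! h
      rw [show Z = 0 from Finsupp.ext h, degr_eq_degree, map_zero] at hn
      omega
    have hZ' : 0 ≤ Z - Finsupp.single P 1 := fun Q => by
      have : 0 ≤ Z Q := hZ Q
      rcases eq_or_ne P Q with rfl | hPQ
      · simp only [Finsupp.coe_zero, Pi.zero_apply, Finsupp.coe_sub, Pi.sub_apply,
          Finsupp.single_eq_same]
        omega
      · simpa [Finsupp.single_eq_of_ne' hPQ]
    obtain ⟨Z', rfl⟩ : ∃ Z', Z = Z' + Finsupp.single P 1 := ⟨_, (sub_add_cancel _ _).symm⟩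
    rw [add_sub_cancel_right] at hZ'
    refine add_single Z' P hZ' (ih hZ' ?_)
    rw [degr_eq_degree, map_add, Finsupp.degree_single, ← degr_eq_degree] at hn
    omega

theorem mem_support_add_iff_of_nonneg {ι : Type*} {D E : ι →₀ ℤ} (hD : 0 ≤ D) (hE : 0 ≤ E)
    {P : ι} : P ∈ (D + E).support ↔ P ∈ D.support ∨ P ∈ E.support := by
  have : 0 ≤ D P := hD P
  have : 0 ≤ E P := hE P
  simp only [Finsupp.mem_support_iff, Finsupp.add_apply]
  omega

namespace Curve

variable (X : Curve Point)

theorem l_le_l_add {E : Point →₀ ℤ} (hE : 0 ≤ E) (W : Point →₀ ℤ) : X.l W ≤ X.l (W + E) := by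
  induction hE using effective_induction with
  | zero => simp
  | add_single Z P _ ih => exact ih.trans (by rw [← add_assoc]; exact X.l_mono _ P)

theorem l_add_le {E : Point →₀ ℤ} (hE : 0 ≤ E) (W : Point →₀ ℤ) :
    (X.l (W + E) : ℤ) ≤ X.l W + degr E := by
  induction hE using effective_induction with
  | zero => simp [degr_eq_degree]
  | add_single Z P _ ih =>
    have := X.l_step (W + Z) P
    rw [← add_assoc, degr_eq_degree, map_add, Finsupp.degree_single, ← degr_eq_degree]
    omega

/-- `Γ_Q` is closed under addition and contains `P ≠ Q`, so otherwise `A + Q` would lie in `Γ_Q`. -/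
theorem l_add_single_sub_single_eq {A : Point →₀ ℤ} {P Q : Point} (hPQ : P ≠ Q)
    (h : X.l (A + Finsupp.single Q 1) = X.l A) :
    X.l (A + Finsupp.single Q 1 - Finsupp.single P 1) = X.l (A - Finsupp.single P 1) := by
  by_contra hne
  have hmem : X.l (A + Finsupp.single Q 1 - Finsupp.single P 1) ≠
      X.l (A + Finsupp.single Q 1 - Finsupp.single P 1 - Finsupp.single Q 1) := by
    rwa [sub_right_comm, add_sub_cancel_right]
  have := X.gamma_add Q hmem (X.point_nongap hPQ)
  rw [sub_add_cancel, add_sub_cancel_right] at this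
  exact this h

theorem l_add_sub_single_eq {A Z : Point →₀ ℤ} (hZ : 0 ≤ Z) {P : Point} (hP : P ∉ Z.support)
    (h : X.l (A + Z) = X.l A) :
    X.l (A + Z - Finsupp.single P 1) = X.l (A - Finsupp.single P 1) := by
  induction hZ using effective_induction with
  | zero => simp
  | add_single Z Q hZ ih =>
    have hone : (0 : Point →₀ ℤ) ≤ Finsupp.single Q 1 := Finsupp.single_nonneg.mpr zero_le_one
    rw [mem_support_add_iff_of_nonneg hZ hone, Finsupp.mem_support_single, not_or] at hP
    rw [← add_assoc] at h ⊢
    have h₁ := X.l_le_l_add hZ A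
    have h₂ := X.l_mono (A + Z) Q
    rw [X.l_add_single_sub_single_eq (fun hPQ => hP.2 ⟨hPQ, one_ne_zero⟩) (by omega),
      ih hP.1 (by omega)]

theorem l_add_sub_eq {A Z D : Point →₀ ℤ} (hZ : 0 ≤ Z) (hD : 0 ≤ D)
    (hDZ : Disjoint D.support Z.support) (h : X.l (A + Z) = X.l A) :
    X.l (A + Z - D) = X.l (A - D) := by
  induction hD using effective_induction generalizing A with
  | zero => simpa using h
  | add_single D P hD ih =>
    have hone : (0 : Point →₀ ℤ) ≤ Finsupp.single P 1 := Finsupp.single_nonneg.mpr zero_le_one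
    have hsupp {Q} : Q ∈ (D + Finsupp.single P 1).support ↔ Q ∈ D.support ∨ Q = P := by
      simp [mem_support_add_iff_of_nonneg hD hone]
    have hPZ : P ∉ Z.support := Finset.disjoint_left.mp hDZ (hsupp.mpr (.inr rfl))
    have hstep := X.l_add_sub_single_eq hZ hPZ h
    rw [add_sub_right_comm] at hstep
    rw [add_comm D, ← sub_sub, ← sub_sub, add_sub_right_comm A Z]
    exact ih (Finset.disjoint_left.mpr fun Q hQ => Finset.disjoint_left.mp hDZ
      (hsupp.mpr (.inl hQ))) hstep

theorem lin_sub {A B : Point →₀ ℤ} (E : Point →₀ ℤ) (h : X.lin A B) : X.lin (A - E) (B - E) := by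
  simpa only [sub_eq_add_neg] using X.lin_add (-E) h

theorem l_canonical_sub_eq {B Z : Point →₀ ℤ} (h : X.l (B + Z) = X.l B) :
    (X.l (X.K - B) : ℤ) = X.l (X.K - B - Z) + degr Z := by
  have hB := X.rr B
  have hBZ := X.rr (B + Z)
  rw [h, ← sub_sub, degr_eq_degree, map_add, ← degr_eq_degree, ← degr_eq_degree] at hBZ
  linarith

theorem l_add_add_sub_le {A Z E D : Point →₀ ℤ} (hZ : 0 ≤ Z) (hE : 0 ≤ E) (hD : 0 ≤ D)
    (hDZ : Disjoint D.support Z.support) (h : X.l (A + Z) = X.l A) :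
    (X.l (A + Z + E - D) : ℤ) ≤ X.l (A + E - D) + degr E :=
  calc (X.l (A + Z + E - D) : ℤ) = X.l (A + Z - D + E) := by rw [add_sub_right_comm]
    _ ≤ X.l (A + Z - D) + degr E := X.l_add_le hE _
    _ = X.l (A - D) + degr E := by rw [X.l_add_sub_eq hZ hD hDZ h]
    _ ≤ X.l (A - D + E) + degr E := by gcongr; exact X.l_le_l_add hE _
    _ = X.l (A + E - D) + degr E := by rw [add_sub_right_comm]

end Curve

/-- (Lundell–McCullough floor bound) Let `G = K + C = A + B + Z` with `Z ≥ 0`,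
`L(A+Z) = L(A)` and `L(B+Z) = L(B)`.  For `D` (a set of distinct rational points)
disjoint from the support of `Z`, the minimum distance of the residue code `C_Ω(D,G)`
is at least `deg C + deg Z`.  The residue code is modeled abstractly via the defining
support property of its nonzero codewords. -/
theorem lundell_mccullough_bound (X : Curve Point) {F : Type*} [Field F] [DecidableEq F]
    {n : ℕ} (Code : Submodule F (Fin n → F)) (D : Finset Point)
    (G C A B Z : Point →₀ ℤ)
    (hG : G = X.K + C) (hdec : G = A + B + Z) (hZ : 0 ≤ Z)
    (hAZ : X.l (A + Z) = X.l A) (hBZ : X.l (B + Z) = X.l B)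
    (hDZ : ∀ P ∈ D, P ∉ Z.support)
    (hcode : ∀ c ∈ Code, c ≠ 0 → ∃ D' E : Point →₀ ℤ,
      0 ≤ D' ∧ (∀ Q, D' Q ≤ 1) ∧ D'.support ⊆ D ∧
      0 ≤ E ∧ Disjoint E.support D'.support ∧
      X.lin X.K (G - D' + E) ∧ degr D' = (hammingNorm c : ℤ)) :
    ∀ c ∈ Code, c ≠ 0 → degr C + degr Z ≤ (hammingNorm c : ℤ) := by
  intro c hc hc0
  obtain ⟨D', E, hD', -, hD'D, hE, -, hlin, hdeg⟩ := hcode c hc hc0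
  have hdegD' : degr D' = degr C + degr E := by
    have := X.deg_lin hlin
    simp only [hG, degr_eq_degree, map_add, map_sub] at this
    simp only [degr_eq_degree]
    linarith
  have hKB : X.l (X.K - B) = X.l (A + Z + E - D') := by
    rw [X.l_lin (X.lin_sub B hlin), hdec]; congr 1; abel
  have hKBZ : X.l (X.K - B - Z) = X.l (A + E - D') := by
    rw [sub_sub, X.l_lin (X.lin_sub (B + Z) hlin), hdec]; congr 1; abel
  have hfloor := X.l_add_add_sub_le hZ hE hD'
    (Finset.disjoint_left.mpr fun P hP => hDZ P (hD'D hP)) hAZ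
  have hjump := X.l_canonical_sub_eq hBZ
  rw [hKB, hKBZ] at hjump
  linarith
end
end

section
/- (One-parameter formulation of the GST bound) Let G = K + C and let B be any divisor. For D disjoint from the support of B - floor(B), the minimum distance of C_Ω(D,G) satisfies d >= deg C + l(B - C) - l(floor(B) - C). -/
noncomputable section

variable {Point : Type*}

/-- `Bf` is the floor `⌊B⌋` of the divisor `B`: the unique minimal divisor with
`L(Bf) = L(B)`. -/
def IsFloor (X : Curve Point) (B Bf : Point →₀ ℤ) : Prop :=
  Bf ≤ B ∧ X.l Bf = X.l B ∧ ∀ B' : Point →₀ ℤ, B' ≤ B → X.l B' = X.l B → Bf ≤ B'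

lemma degr_add (A B : Point →₀ ℤ) : degr (A + B) = degr A + degr B := by
  classical
  exact Finsupp.sum_add_index' (fun _ => rfl) (fun _ m n => rfl)

lemma degr_zero : degr (0 : Point →₀ ℤ) = 0 := by simp [degr]

lemma degr_single (P : Point) (n : ℤ) : degr (Finsupp.single P n) = n := by
  simp [degr, Finsupp.sum_single_index]

lemma degr_neg (A : Point →₀ ℤ) : degr (-A) = -degr A := by
  have := degr_add A (-A); simp [degr_zero] at this; linarith

lemma degr_sub (A B : Point →₀ ℤ) : degr (A - B) = degr A - degr B := by
  rw [sub_eq_add_neg, degr_add, degr_neg]; ring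

lemma degr_nonneg_s7 {E : Point →₀ ℤ} (h : 0 ≤ E) : 0 ≤ degr E := by
  classical
  refine Finset.sum_nonneg fun P _ => ?_
  simpa using h P

lemma eff_eq_zero_of_degr {E : Point →₀ ℤ} (h : 0 ≤ E) (hd : degr E ≤ 0) : E = 0 := by
  classical
  ext P
  by_contra hP
  have hmem : P ∈ E.support := Finsupp.mem_support_iff.2 (by simpa using hP)
  have h1 : 1 ≤ E P := by have : (0:ℤ) ≤ E P := by simpa using h P
                          simp only [Finsupp.mem_support_iff] at hmem; omega
  have : degr E = E P + ∑ Q ∈ E.support.erase P, E Q := by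
    rw [degr, Finsupp.sum, ← Finset.add_sum_erase _ _ hmem]
  have hrest : 0 ≤ ∑ Q ∈ E.support.erase P, E Q :=
    Finset.sum_nonneg fun Q _ => by simpa using h Q
  omega

/-- Induction principle for effective divisors. -/
lemma eff_induction {M : (Point →₀ ℤ) → Prop} (h0 : M 0)
    (hstep : ∀ (E : Point →₀ ℤ) (P : Point), 0 ≤ E → P ∈ (E + Finsupp.single P 1).support →
      M E → M (E + Finsupp.single P 1)) :
    ∀ E : Point →₀ ℤ, 0 ≤ E → M E := by
  classical
  intro E hE
  generalize hn : (degr E).toNat = n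
  induction n generalizing E with
  | zero =>
      have : E = 0 := eff_eq_zero_of_degr hE (by omega)
      rwa [this]
  | succ n ih =>
      have hEne : E ≠ 0 := by
        rintro rfl; simp [degr_zero] at hn
      obtain ⟨P, hP⟩ : ∃ P, P ∈ E.support := by
        rcases Finset.eq_empty_or_nonempty E.support with h | ⟨P, hP⟩
        · exact absurd (Finsupp.support_eq_empty.1 h) hEne
        · exact ⟨P, hP⟩
      have hP1 : 1 ≤ E P := by
        have h1 : (0:ℤ) ≤ E P := by simpa using hE P
        have h2 := Finsupp.mem_support_iff.1 hP; omega
      set E' : Point →₀ ℤ := E - Finsupp.single P 1 with hE'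
      have hE'0 : 0 ≤ E' := by
        intro Q
        have h1 : (0:ℤ) ≤ E Q := by simpa using hE Q
        simp only [hE', Finsupp.coe_sub, Pi.sub_apply, Finsupp.single_apply,
          Finsupp.coe_zero, Pi.zero_apply]
        split
        · rename_i h; subst h; omega
        · omega
      have hEeq : E = E' + Finsupp.single P 1 := by simp [hE']
      have hdeg : (degr E').toNat = n := by
        have : degr E' = degr E - 1 := by
          rw [hE', degr_sub, degr_single]
        have h0 : 0 ≤ degr E' := degr_nonneg_s7 hE'0
        omega
      have hPmem : P ∈ (E' + Finsupp.single P 1).support := by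
        rw [← hEeq]; exact hP
      have := hstep E' P hE'0 hPmem (ih E' hE'0 hdeg)
      rwa [hEeq]


lemma eff_single (P : Point) : (0 : Point →₀ ℤ) ≤ Finsupp.single P 1 := by
  classical
  intro Q
  simp only [Finsupp.coe_zero, Pi.zero_apply]
  rcases eq_or_ne P Q with h | h
  · rw [Finsupp.single_apply, if_pos h]; norm_num
  · rw [Finsupp.single_apply, if_neg h]

lemma le_add_eff {A E : Point →₀ ℤ} (h : 0 ≤ E) : A ≤ A + E := by
  intro Q
  have hQ : (0:ℤ) ≤ E Q := by simpa using h Q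
  simp only [Finsupp.coe_add, Pi.add_apply]
  omega

lemma support_subset_add_single {E : Point →₀ ℤ} (hE : 0 ≤ E) (P : Point) :
    E.support ⊆ (E + Finsupp.single P 1).support := by
  intro P' hP'
  have hv : (0:ℤ) ≤ E P' := by simpa using hE P'
  have hne := Finsupp.mem_support_iff.1 hP'
  rw [Finsupp.mem_support_iff, Finsupp.add_apply]
  have hs : (0:ℤ) ≤ (Finsupp.single P (1:ℤ)) P' := by simpa using eff_single P P'
  omega

lemma l_mono_eff (X : Curve Point) :
    ∀ E : Point →₀ ℤ, 0 ≤ E → ∀ A, X.l A ≤ X.l (A + E) := by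
  refine eff_induction ?_ ?_
  · intro A; simp
  · intro E P hE _ ih A
    calc X.l A ≤ X.l (A + E) := ih A
      _ ≤ X.l (A + E + Finsupp.single P 1) := X.l_mono _ _
      _ = X.l (A + (E + Finsupp.single P 1)) := by rw [add_assoc]

lemma l_mono_le (X : Curve Point) {A B : Point →₀ ℤ} (h : A ≤ B) : X.l A ≤ X.l B := by
  have h0 : 0 ≤ B - A := by
    intro Q
    have := h Q
    simp only [Finsupp.coe_zero, Pi.zero_apply, Finsupp.coe_sub, Pi.sub_apply]
    omega
  have := l_mono_eff X (B - A) h0 A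
  simpa using this

lemma l_add_le (X : Curve Point) :
    ∀ E : Point →₀ ℤ, 0 ≤ E → ∀ A, (X.l (A + E) : ℤ) ≤ X.l A + degr E := by
  refine eff_induction ?_ ?_
  · intro A; simp [degr_zero]
  · intro E P hE _ ih A
    have h1 := X.l_step (A + E) P
    have h2 := ih A
    have h3 : degr (E + Finsupp.single P 1) = degr E + 1 := by
      rw [degr_add, degr_single]
    calc (X.l (A + (E + Finsupp.single P 1)) : ℤ)
        = X.l (A + E + Finsupp.single P 1) := by rw [add_assoc]
      _ ≤ X.l (A + E) + 1 := by exact_mod_cast h1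
      _ ≤ X.l A + degr E + 1 := by linarith
      _ = X.l A + degr (E + Finsupp.single P 1) := by rw [h3]; ring

lemma gamma_add_eff (X : Curve Point) (Q : Point) :
    ∀ E : Point →₀ ℤ, 0 ≤ E → (∀ P ∈ E.support, P ≠ Q) →
      ∀ A, X.l A ≠ X.l (A - Finsupp.single Q 1) →
      X.l (A + E) ≠ X.l (A + E - Finsupp.single Q 1) := by
  refine eff_induction ?_ ?_
  · intro _ A hA; simpa using hA
  · intro E P hE hPmem ih hsupp A hA
    have hPQ : P ≠ Q := hsupp P hPmem
    have hEsupp : ∀ P' ∈ E.support, P' ≠ Q := fun P' hP' =>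
      hsupp P' (support_subset_add_single hE P hP')
    have h1 := ih hEsupp A hA
    have h2 := X.point_nongap hPQ
    have h3 := X.gamma_add Q h1 h2
    rw [← add_assoc]
    exact h3

lemma jump_exists (X : Curve Point) :
    ∀ E : Point →₀ ℤ, 0 ≤ E → ∀ A0, X.l A0 < X.l (A0 + E) →
      ∃ A Q, A0 ≤ A ∧ A + Finsupp.single Q 1 ≤ A0 + E ∧ Q ∈ E.support ∧
        X.l A < X.l (A + Finsupp.single Q 1) := by
  refine eff_induction ?_ ?_
  · intro A0 h; simp at h
  · intro E P hE hPmem ih A0 h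
    by_cases hc : X.l A0 < X.l (A0 + Finsupp.single P 1)
    · refine ⟨A0, P, le_refl _, ?_, hPmem, hc⟩
      intro Q
      have hQ : (0:ℤ) ≤ E Q := by simpa using hE Q
      simp only [Finsupp.coe_add, Pi.add_apply]
      omega
    · have heq : X.l A0 = X.l (A0 + Finsupp.single P 1) :=
        le_antisymm (X.l_mono _ _) (not_lt.1 hc)
      have e : A0 + Finsupp.single P 1 + E = A0 + (E + Finsupp.single P 1) := by abel
      have h' : X.l (A0 + Finsupp.single P 1) < X.l (A0 + Finsupp.single P 1 + E) := by
        rw [← heq, e]; exact h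
      obtain ⟨A, Q, h1, h2, h3, h4⟩ := ih (A0 + Finsupp.single P 1) h'
      refine ⟨A, Q, le_trans (le_add_eff (eff_single P)) h1, ?_,
        support_subset_add_single hE P h3, h4⟩
      rwa [e] at h2

lemma floor_sub (X : Curve Point) {B Bf D' : Point →₀ ℤ} (hBf : IsFloor X B Bf)
    (hD' : 0 ≤ D') (hdisj : ∀ P ∈ D'.support, P ∉ (B - Bf).support) :
    X.l (B - D') = X.l (Bf - D') := by
  obtain ⟨hle, hl, -⟩ := hBf
  have hBBf : 0 ≤ B - Bf := by
    intro Q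
    have := hle Q
    simp only [Finsupp.coe_zero, Pi.zero_apply, Finsupp.coe_sub, Pi.sub_apply]
    omega
  have key : B - D' = (Bf - D') + (B - Bf) := by abel
  have hmono : X.l (Bf - D') ≤ X.l (B - D') := by
    rw [key]; exact l_mono_eff X _ hBBf _
  rcases eq_or_lt_of_le hmono with h | h
  · exact h.symm
  exfalso
  obtain ⟨A, Q, h1, h2, h3, h4⟩ :=
    jump_exists X (B - Bf) hBBf (Bf - D') (by rw [← key]; exact h)
  rw [← key] at h2
  have hAQ : X.l (A + Finsupp.single Q 1) ≠
      X.l (A + Finsupp.single Q 1 - Finsupp.single Q 1) := by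
    have e : A + Finsupp.single Q 1 - Finsupp.single Q 1 = A := by abel
    rw [e]; omega
  have hQD' : ∀ P ∈ D'.support, P ≠ Q := fun P hP hPQ => (hdisj P hP) (hPQ ▸ h3)
  have hst := gamma_add_eff X Q D' hD' hQD' (A + Finsupp.single Q 1) hAQ
  have e1 : A + Finsupp.single Q 1 + D' - Finsupp.single Q 1 = A + D' := by abel
  rw [e1] at hst
  have hmono2 : X.l (A + D') ≤ X.l (A + Finsupp.single Q 1 + D') := by
    have e : A + Finsupp.single Q 1 + D' = (A + D') + Finsupp.single Q 1 := by abel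
    rw [e]; exact X.l_mono _ _
  have hlt : X.l (A + D') < X.l (A + Finsupp.single Q 1 + D') :=
    lt_of_le_of_ne hmono2 (Ne.symm hst)
  have hBfle : X.l Bf ≤ X.l (A + D') := by
    refine l_mono_le X ?_
    intro P
    have h1P := h1 P
    have hDP : (0:ℤ) ≤ D' P := by simpa using hD' P
    simp only [Finsupp.coe_sub, Pi.sub_apply] at h1P
    simp only [Finsupp.coe_add, Pi.add_apply]
    omega
  have hleB : X.l (A + Finsupp.single Q 1 + D') ≤ X.l B := by
    refine l_mono_le X ?_
    intro P
    have h2P := h2 P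
    simp only [Finsupp.coe_sub, Pi.sub_apply, Finsupp.coe_add, Pi.add_apply] at h2P ⊢
    omega
  omega

/-- (One-parameter formulation of the GST bound) Let `G = K + C` and let `B` be any
divisor with floor `⌊B⌋`.  For `D` disjoint from the support of `B - ⌊B⌋`, the minimum
distance of `C_Ω(D,G)` satisfies `d ≥ deg C + l(B - C) - l(⌊B⌋ - C)`.  The residue code
is modeled abstractly via the defining support property of its nonzero codewords. -/
theorem gst_one_parameter_bound (X : Curve Point) {F : Type*} [Field F] [DecidableEq F]
    {n : ℕ} (Code : Submodule F (Fin n → F)) (D : Finset Point)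
    (G C B Bf : Point →₀ ℤ)
    (hG : G = X.K + C) (hBf : IsFloor X B Bf)
    (hDB : ∀ P ∈ D, P ∉ (B - Bf).support)
    (hcode : ∀ c ∈ Code, c ≠ 0 → ∃ D' E : Point →₀ ℤ,
      0 ≤ D' ∧ (∀ Q, D' Q ≤ 1) ∧ D'.support ⊆ D ∧
      0 ≤ E ∧ Disjoint E.support D'.support ∧
      X.lin X.K (G - D' + E) ∧ degr D' = (hammingNorm c : ℤ)) :
    ∀ c ∈ Code, c ≠ 0 →
      degr C + ((X.l (B - C) : ℤ) - X.l (Bf - C)) ≤ (hammingNorm c : ℤ) := by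
  intro c hc hc0
  obtain ⟨D', E, hD'0, -, hD'supp, hE0, -, hlin, hdeg⟩ := hcode c hc hc0
  have hlin0 : X.lin X.K (X.K + (C - D' + E)) := by
    have e : G - D' + E = X.K + (C - D' + E) := by rw [hG]; abel
    rwa [e] at hlin
  have hdegE : degr D' = degr C + degr E := by
    have hdl := X.deg_lin hlin0
    rw [degr_add, degr_add, degr_sub] at hdl
    linarith
  have hlinB : X.lin (B - C) (B - D' + E) := by
    have h1 := X.lin_add (B - C - X.K) hlin0
    have e1 : X.K + (B - C - X.K) = B - C := by abel
    have e2 : X.K + (C - D' + E) + (B - C - X.K) = B - D' + E := by abel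
    rwa [e1, e2] at h1
  have hlinBf : X.lin (Bf - C) (Bf - D' + E) := by
    have h1 := X.lin_add (Bf - C - X.K) hlin0
    have e1 : X.K + (Bf - C - X.K) = Bf - C := by abel
    have e2 : X.K + (C - D' + E) + (Bf - C - X.K) = Bf - D' + E := by abel
    rwa [e1, e2] at h1
  have hfloor : X.l (B - D') = X.l (Bf - D') :=
    floor_sub X hBf hD'0 (fun P hP => hDB P (hD'supp hP))
  have h1 : (X.l (B - C) : ℤ) ≤ X.l (B - D') + degr E := by
    rw [X.l_lin hlinB]
    exact l_add_le X E hE0 (B - D')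
  have h2 : X.l (Bf - D') ≤ X.l (Bf - C) := by
    rw [X.l_lin hlinBf]
    exact l_mono_eff X E hE0 (Bf - D')
  have hfz : (X.l (B - D') : ℤ) = X.l (Bf - D') := by exact_mod_cast hfloor
  have h2z : (X.l (Bf - D') : ℤ) ≤ X.l (Bf - C) := by exact_mod_cast h2
  rw [← hdeg]
  linarith
end
end
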